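/- arXiv:2212.09293 — 2 statements merged into one kernel-verified Lean document; each statement's English description precedes it below -/
import Mathlib

section
/- Let T > 0, C > 0, let A : [0, T] → [0, +∞) be integrable, and let D : [0, T] → (0, 1/e] be absolutely continuous with D'(t) ≤ C · A(t) · D(t) · √|log D(t)| for almost every t ∈ [0, T]. Then for every t ∈ [0, T] such that √|log D(0)| ≥ (C/2) ∫₀^t A(s) ds, one has D(t) ≤ exp{ −( √|log D(0)| − (C/2) ∫₀^t A(s) ds )² }. -/
open MeasureTheory Set

/-- Grönwall-type lemma for the kinetic quantity: if `D : [0,T] → (0, 1/e]`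
is absolutely continuous (encoded by the fundamental theorem of calculus with an integrable
a.e. derivative `D'`) and `D' ≤ C·A·D·√|log D|` a.e., then
`D(t) ≤ exp(−(√|log D(0)| − (C/2)∫₀ᵗ A)²)` whenever `√|log D(0)| ≥ (C/2)∫₀ᵗ A`. -/
theorem stmt14 (T C : ℝ) (hT : 0 < T) (hC : 0 < C)
    (A : ℝ → ℝ) (hA : IntegrableOn A (Set.Icc 0 T)) (hA0 : ∀ t ∈ Set.Icc (0:ℝ) T, 0 ≤ A t)
    (D D' : ℝ → ℝ)
    (hDpos : ∀ t ∈ Set.Icc (0:ℝ) T, 0 < D t)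
    (hDle : ∀ t ∈ Set.Icc (0:ℝ) T, D t ≤ (Real.exp 1)⁻¹)
    (hD'int : IntegrableOn D' (Set.Icc 0 T))
    (hFTC : ∀ t ∈ Set.Icc (0:ℝ) T, D t = D 0 + ∫ s in (0:ℝ)..t, D' s)
    (hD'le : ∀ᵐ t ∂(volume.restrict (Set.Icc (0:ℝ) T)),
      D' t ≤ C * A t * D t * Real.sqrt |Real.log (D t)|) :
    ∀ t ∈ Set.Icc (0:ℝ) T,
      Real.sqrt |Real.log (D 0)| ≥ (C / 2) * ∫ s in (0:ℝ)..t, A s →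
      D t ≤ Real.exp
        (-(Real.sqrt |Real.log (D 0)| - (C / 2) * ∫ s in (0:ℝ)..t, A s) ^ 2) := by
  intro t₀ ht₀ hR
  obtain ⟨ht₀0, ht₀T⟩ := ht₀
  set a : ℝ := Real.sqrt |Real.log (D 0)| with ha_def
  set h : ℝ → ℝ := fun y => Real.exp (-(a - C / 2 * y) ^ 2) with hh_def
  set F : ℝ → ℝ := fun t => ∫ s in (0:ℝ)..t, A s with hF_def
  have h0T : (0:ℝ) ∈ Icc (0:ℝ) T := ⟨le_refl 0, hT.le⟩
  have hIA : ∀ u v : ℝ, 0 ≤ u → u ≤ v → v ≤ T → IntervalIntegrable A volume u v := by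
    intro u v h1 h2 h3
    refine (hA.mono_set ?_).intervalIntegrable
    rw [uIcc_of_le h2]
    exact Icc_subset_Icc h1 h3
  have hID : ∀ u v : ℝ, 0 ≤ u → u ≤ v → v ≤ T → IntervalIntegrable D' volume u v := by
    intro u v h1 h2 h3
    refine (hD'int.mono_set ?_).intervalIntegrable
    rw [uIcc_of_le h2]
    exact Icc_subset_Icc h1 h3
  have hFsub : ∀ u v : ℝ, 0 ≤ u → u ≤ v → v ≤ T → F v - F u = ∫ s in u..v, A s := by
    intro u v h1 h2 h3
    rw [hF_def]
    exact intervalIntegral.integral_interval_sub_left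
      (hIA 0 v (le_refl 0) (h1.trans h2) h3) (hIA 0 u (le_refl 0) h1 (h2.trans h3))
  have hFmono : ∀ u v : ℝ, 0 ≤ u → u ≤ v → v ≤ T → F u ≤ F v := by
    intro u v h1 h2 h3
    have h4 := hFsub u v h1 h2 h3
    have h5 : 0 ≤ ∫ s in u..v, A s :=
      intervalIntegral.integral_nonneg h2 fun x hx => hA0 x ⟨h1.trans hx.1, hx.2.trans h3⟩
    linarith
  have hFcont : ContinuousOn F (Icc 0 T) := by
    rw [hF_def]
    have := intervalIntegral.continuousOn_primitive_interval
      (a := (0:ℝ)) (b := T) (μ := volume) (f := A) (by rwa [uIcc_of_le hT.le])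
    rwa [uIcc_of_le hT.le] at this
  have hDcont : ContinuousOn D (Icc 0 T) := by
    have hc : ContinuousOn (fun t => D 0 + ∫ s in (0:ℝ)..t, D' s) (Icc 0 T) := by
      apply continuousOn_const.add
      have := intervalIntegral.continuousOn_primitive_interval
        (a := (0:ℝ)) (b := T) (μ := volume) (f := D') (by rwa [uIcc_of_le hT.le])
      rwa [uIcc_of_le hT.le] at this
    exact hc.congr hFTC
  have hlogD : ∀ s, s ∈ Icc (0:ℝ) T → Real.log (D s) ≤ -1 := by
    intro s hs
    have h1 : D s ≤ Real.exp (-1) := by rw [Real.exp_neg]; exact hDle s hs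
    exact (Real.log_le_iff_le_exp (hDpos s hs)).2 h1
  have habs : ∀ s, s ∈ Icc (0:ℝ) T → |Real.log (D s)| = -Real.log (D s) := fun s hs =>
    abs_of_nonpos (le_trans (hlogD s hs) (by norm_num))
  have hcont_h : Continuous h := by
    rw [hh_def]
    exact Real.continuous_exp.comp
      (((continuous_const.sub (continuous_const.mul continuous_id)).pow 2).neg)
  have hderiv : ∀ y : ℝ, HasDerivAt h (C * (a - C / 2 * y) * h y) y := by
    intro y
    have h1 : HasDerivAt (fun y : ℝ => a - C / 2 * y) (-(C / 2)) y := by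
      simpa using ((hasDerivAt_id y).const_mul (C / 2)).const_sub a
    have h2 := ((h1.pow 2).neg).exp
    change HasDerivAt (fun x => Real.exp (-(a - C / 2 * x) ^ 2)) (Real.exp (-(a - C / 2 * y) ^ 2) * _) y at h2
    rw [hh_def]
    convert h2 using 1
    simp only [Pi.neg_apply, Pi.pow_apply, Nat.cast_ofNat, show (2:ℕ) - 1 = 1 from rfl, pow_one]
    ring
  have hHcont : Continuous (fun y => C * (a - C / 2 * y) * h y) :=
    ((continuous_const.mul (continuous_const.sub (continuous_const.mul continuous_id)))).mul hcont_h
  have hhpos : ∀ y, 0 < h y := fun y => Real.exp_pos _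
  have hh0 : h 0 = D 0 := by
    rw [hh_def]
    show Real.exp (-(a - C / 2 * 0) ^ 2) = D 0
    rw [mul_zero, sub_zero, ha_def, Real.sq_sqrt (abs_nonneg _), habs 0 h0T, neg_neg,
      Real.exp_log (hDpos 0 h0T)]
  have hR' : C / 2 * F t₀ ≤ a := by rw [hF_def]; exact hR
  have hmu : ∀ s : ℝ, 0 ≤ s → s ≤ t₀ → 0 ≤ a - C / 2 * F s := by
    intro s h1 h2
    have h3 := hFmono s t₀ h1 h2 ht₀T
    have h4 := mul_le_mul_of_nonneg_left h3 (half_pos hC).le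
    linarith
  have key : ∀ ε : ℝ, 0 < ε → D t₀ ≤ h (F t₀) * Real.exp (ε * (t₀ + 1)) := by
    intro ε hε
    by_contra hcon
    push_neg at hcon
    set χ : ℝ → ℝ := fun s => h (F s) * Real.exp (ε * (s + 1)) with hχ_def
    have hχcont : ContinuousOn χ (Icc 0 T) := by
      rw [hχ_def]
      exact (hcont_h.comp_continuousOn hFcont).mul
        ((Real.continuous_exp.comp (continuous_const.mul (continuous_id.add continuous_const))).continuousOn)
    have hχ0 : D 0 ≤ χ 0 := by
      have hv : χ 0 = D 0 * Real.exp (ε * (0 + 1)) := by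
        rw [hχ_def]
        show h (F 0) * Real.exp (ε * (0+1)) = D 0 * Real.exp (ε * (0 + 1))
        rw [hF_def]
        show h (∫ s in (0:ℝ)..(0:ℝ), A s) * _ = _
        rw [intervalIntegral.integral_same, hh0]
      rw [hv]
      nlinarith [Real.exp_le_exp.2 (show (0:ℝ) ≤ ε * (0 + 1) by nlinarith), Real.exp_zero,
        hDpos 0 h0T]
    set K : Set ℝ := {s | s ∈ Icc 0 t₀ ∧ D s ≤ χ s} with hK_def
    have hKsub : K ⊆ Icc 0 t₀ := fun s hs => hs.1
    have hK0 : (0:ℝ) ∈ K := ⟨⟨le_refl 0, ht₀0⟩, hχ0⟩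
    have hsubT : Icc (0:ℝ) t₀ ⊆ Icc (0:ℝ) T := Icc_subset_Icc le_rfl ht₀T
    have hKclosed : IsClosed K := by
      have hcont : ContinuousOn (fun s => D s - χ s) (Icc 0 t₀) :=
        (hDcont.mono hsubT).sub (hχcont.mono hsubT)
      have h2 := hcont.preimage_isClosed_of_isClosed isClosed_Icc (isClosed_Iic (a := (0:ℝ)))
      have h3 : K = Icc 0 t₀ ∩ (fun s => D s - χ s) ⁻¹' Iic 0 := by
        ext s
        simp only [hK_def, mem_setOf_eq, mem_inter_iff, mem_preimage, mem_Iic, sub_nonpos]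
      rw [h3]; exact h2
    have hKcpt : IsCompact K := isCompact_Icc.of_isClosed_subset hKclosed hKsub
    have hτK : sSup K ∈ K := hKcpt.sSup_mem ⟨0, hK0⟩
    set τ := sSup K with hτ_def
    have hτ0 : 0 ≤ τ := hτK.1.1
    have hτt₀ : τ ≤ t₀ := hτK.1.2
    have hτT : τ ∈ Icc (0:ℝ) T := ⟨hτ0, hτt₀.trans ht₀T⟩
    have hDχτ : D τ ≤ χ τ := hτK.2
    have hτlt : τ < t₀ := by
      rcases lt_or_eq_of_le hτt₀ with hx | hx
      · exact hx
      · exfalso; rw [hx] at hDχτ; exact absurd hDχτ (not_le.2 hcon)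
    have habove : ∀ s, τ < s → s ≤ t₀ → χ s < D s := by
      intro s h1 h2
      by_contra hle
      push_neg at hle
      exact absurd (le_csSup hKcpt.bddAbove ⟨⟨hτ0.trans h1.le, h2⟩, hle⟩) (not_le.2 h1)
    rcases lt_or_eq_of_le hDχτ with hlt | heq
    · -- D τ < χ τ : contradiction by continuity just to the right of τ
      have hs2 : Icc τ t₀ ⊆ Icc (0:ℝ) T := Icc_subset_Icc hτ0 ht₀T
      have hconts : ContinuousWithinAt (fun s => χ s - D s) (Icc τ t₀) τ :=
        ((hχcont.mono hs2).sub (hDcont.mono hs2)).continuousWithinAt ⟨le_refl τ, hτt₀⟩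
      have hev : {s | 0 < χ s - D s} ∈ nhdsWithin τ (Icc τ t₀) := by
        have hpos : χ τ - D τ ∈ Ioi (0:ℝ) := by simp only [mem_Ioi]; linarith
        exact hconts (isOpen_Ioi.mem_nhds hpos)
      have hne : (nhdsWithin τ (Ioc τ t₀)).NeBot := left_nhdsWithin_Ioc_neBot hτlt
      have hev2 : {s | 0 < χ s - D s} ∈ nhdsWithin τ (Ioc τ t₀) :=
        nhdsWithin_mono τ Ioc_subset_Icc_self hev
      obtain ⟨s, hs1, hs2'⟩ := hne.nonempty_of_mem (Filter.inter_mem hev2 self_mem_nhdsWithin)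
      have := habove s hs2'.1 hs2'.2
      simp only [mem_setOf_eq] at hs1
      linarith
    · -- main case : D τ = χ τ
      set lam := Real.exp (ε * (τ + 1)) with hlam_def
      have hlampos : 0 < lam := Real.exp_pos _
      have hlam1 : 1 < lam := by
        rw [hlam_def]
        have h9 : 0 < ε * (τ + 1) := mul_pos hε (by linarith)
        linarith [Real.add_one_le_exp (ε * (τ + 1))]
      set ψτ := h (F τ) with hψτ_def
      have hψτpos : 0 < ψτ := hhpos _
      have hχτval : χ τ = ψτ * lam := rfl
      have hμτ : 0 ≤ a - C / 2 * F τ := hmu τ hτ0 hτt₀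
      set B := C * D τ * Real.sqrt |Real.log (D τ)| with hB_def
      set Hτ := C * (a - C / 2 * F τ) * ψτ with hHτ_def
      have hDτpos := hDpos τ hτT
      have hstrict : B < lam * Hτ := by
        have hDτeq : D τ = ψτ * lam := by rw [heq, hχτval]
        have hlogψτ : Real.log ψτ = -(a - C / 2 * F τ) ^ 2 := by
          rw [hψτ_def, hh_def]; exact Real.log_exp _
        have hlogτ : Real.log (D τ) = -(a - C / 2 * F τ) ^ 2 + ε * (τ + 1) := by
          rw [hDτeq, Real.log_mul (ne_of_gt hψτpos) (ne_of_gt hlampos), hlogψτ, hlam_def,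
            Real.log_exp]
        have h1 : -Real.log (D τ) < (a - C / 2 * F τ) ^ 2 := by
          rw [hlogτ]
          have h9 : 0 < ε * (τ + 1) := mul_pos hε (by linarith)
          linarith
        have h0 : 0 ≤ -Real.log (D τ) := by have := hlogD τ hτT; linarith
        have h2 : Real.sqrt (-Real.log (D τ)) < a - C / 2 * F τ := by
          have h3 := Real.sqrt_lt_sqrt h0 h1
          rwa [Real.sqrt_sq hμτ] at h3
        rw [hB_def, habs τ hτT, hHτ_def]
        calc C * D τ * Real.sqrt (-Real.log (D τ)) < C * D τ * (a - C / 2 * F τ) := by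
              exact (mul_lt_mul_iff_right₀ (by positivity)).2 h2
          _ = lam * (C * (a - C / 2 * F τ) * ψτ) := by rw [hDτeq]; ring
      set η := (lam * Hτ - B) / 3 with hη_def
      have hηpos : 0 < η := by rw [hη_def]; linarith
      have hGcont : ContinuousOn (fun s => C * D s * Real.sqrt |Real.log (D s)|) (Icc 0 T) := by
        have hlogc : ContinuousOn (fun s => Real.log (D s)) (Icc 0 T) :=
          Real.continuousOn_log.comp hDcont fun s hs => by
            simp only [mem_compl_iff, mem_singleton_iff]
            exact ne_of_gt (hDpos s hs)
        exact (continuousOn_const.mul hDcont).mul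
          ((Real.continuous_sqrt.comp continuous_abs).comp_continuousOn hlogc)
      obtain ⟨δ₁, hδ₁pos, hδ₁⟩ : ∃ δ > 0, ∀ s ∈ Icc (0:ℝ) T, dist s τ < δ →
          C * D s * Real.sqrt |Real.log (D s)| < B + η := by
        have hct := hGcont.continuousWithinAt hτT
        have hmem : {s | C * D s * Real.sqrt |Real.log (D s)| < B + η}
            ∈ nhdsWithin τ (Icc (0:ℝ) T) := by
          refine hct (isOpen_Iio.mem_nhds ?_)
          show C * D τ * Real.sqrt |Real.log (D τ)| < B + η
          rw [hB_def]
          linarith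
        rw [Metric.mem_nhdsWithin_iff] at hmem
        obtain ⟨δ, hδpos, hδ⟩ := hmem
        exact ⟨δ, hδpos, fun s hs hd => hδ ⟨Metric.mem_ball.2 hd, hs⟩⟩
      obtain ⟨δ₂, hδ₂pos, hδ₂⟩ : ∃ δ > 0, ∀ y : ℝ, dist y (F τ) < δ →
          Hτ - η / lam < C * (a - C / 2 * y) * h y := by
        have hct := hHcont.continuousAt (x := F τ)
        have hmem : {y | Hτ - η / lam < C * (a - C / 2 * y) * h y} ∈ nhds (F τ) := by
          refine hct (isOpen_Ioi.mem_nhds ?_)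
          show Hτ - η / lam < C * (a - C / 2 * F τ) * h (F τ)
          have hpos : 0 < η / lam := div_pos hηpos hlampos
          rw [hHτ_def, hψτ_def]
          linarith
        rw [Metric.mem_nhds_iff] at hmem
        obtain ⟨δ, hδpos, hδ⟩ := hmem
        exact ⟨δ, hδpos, fun y hy => hδ (Metric.mem_ball.2 hy)⟩
      obtain ⟨δ₃, hδ₃pos, hδ₃⟩ : ∃ δ > 0, ∀ s ∈ Icc (0:ℝ) T, dist s τ < δ →
          dist (F s) (F τ) < δ₂ := by
        have hct := hFcont.continuousWithinAt hτT
        have hmem : {s | dist (F s) (F τ) < δ₂} ∈ nhdsWithin τ (Icc (0:ℝ) T) := by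
          have := hct (Metric.ball_mem_nhds (F τ) hδ₂pos)
          exact this
        rw [Metric.mem_nhdsWithin_iff] at hmem
        obtain ⟨δ, hδpos, hδ⟩ := hmem
        exact ⟨δ, hδpos, fun s hs hd => hδ ⟨Metric.mem_ball.2 hd, hs⟩⟩
      set δ := min δ₁ δ₃ with hδ_def
      have hδpos : 0 < δ := lt_min hδ₁pos hδ₃pos
      set t := min (τ + δ / 2) t₀ with ht_def
      have hτltt : τ < t := lt_min (by linarith) hτlt
      have htt₀ : t ≤ t₀ := min_le_right _ _
      have htT : t ∈ Icc (0:ℝ) T := ⟨hτ0.trans hτltt.le, htt₀.trans ht₀T⟩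
      have htτδ : t - τ ≤ δ / 2 := by
        have h5 := min_le_left (τ + δ / 2) t₀
        rw [ht_def]; linarith
      have hdist_t : dist t τ < δ := by
        rw [Real.dist_eq, abs_of_nonneg (by linarith : 0 ≤ t - τ)]
        linarith
      have hFτt : F τ ≤ F t := hFmono τ t hτ0 hτltt.le htT.2
      have hFdist : dist (F t) (F τ) < δ₂ :=
        hδ₃ t htT (lt_of_lt_of_le hdist_t (min_le_right δ₁ δ₃))
      have hψMVT : (Hτ - η / lam) * (F t - F τ) ≤ h (F t) - h (F τ) := by
        rcases eq_or_lt_of_le hFτt with hFeq | hFlt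
        · rw [← hFeq]; simp
        · obtain ⟨c, hc, hceq⟩ := exists_hasDerivAt_eq_slope h
            (fun y => C * (a - C / 2 * y) * h y) hFlt hcont_h.continuousOn fun y _ => hderiv y
          have hcd : dist c (F τ) < δ₂ := by
            rw [Real.dist_eq, abs_of_pos (by linarith [hc.1] : 0 < c - F τ)]
            have h5 : F t - F τ < δ₂ := by
              have h6 := hFdist
              rw [Real.dist_eq, abs_of_nonneg (by linarith : 0 ≤ F t - F τ)] at h6
              exact h6
            linarith [hc.2]
          have h6 := hδ₂ c hcd
          rw [hceq] at h6
          have h7 := (le_div_iff₀ (sub_pos.2 hFlt)).1 h6.le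
          linarith
      have hIG : IntervalIntegrable (fun s => C * A s * D s * Real.sqrt |Real.log (D s)|)
          volume τ t := by
        obtain ⟨M, hM⟩ := isCompact_Icc.exists_bound_of_continuousOn hGcont
        have heqf : (fun s => C * A s * D s * Real.sqrt |Real.log (D s)|)
            = fun s => (C * D s * Real.sqrt |Real.log (D s)|) * A s := by funext s; ring
        rw [heqf]
        have hsub2 : Icc τ t ⊆ Icc (0:ℝ) T := Icc_subset_Icc hτ0 htT.2
        have hint : IntegrableOn (fun s => (C * D s * Real.sqrt |Real.log (D s)|) * A s)
            (Icc τ t) := by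
          refine Integrable.bdd_mul (c := M) (hA.mono_set hsub2)
            ((hGcont.mono hsub2).aestronglyMeasurable measurableSet_Icc) ?_
          exact (ae_restrict_iff' measurableSet_Icc).2 (Filter.Eventually.of_forall
            fun s hs => hM s (hsub2 hs))
        apply IntegrableOn.intervalIntegrable
        rwa [uIcc_of_le hτltt.le]
      have hb0 : D t - D τ = ∫ s in τ..t, D' s := by
        have h1 := hFTC t htT
        have h2 := hFTC τ hτT
        have h3 := intervalIntegral.integral_interval_sub_left
          (hID 0 t (le_refl 0) (hτ0.trans hτltt.le) htT.2) (hID 0 τ (le_refl 0) hτ0 hτT.2)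
        rw [h1, h2]; linarith
      have hb1 : ∫ s in τ..t, D' s
          ≤ ∫ s in τ..t, C * A s * D s * Real.sqrt |Real.log (D s)| := by
        refine intervalIntegral.integral_mono_ae_restrict hτltt.le
          (hID τ t hτ0 hτltt.le htT.2) hIG ?_
        exact ae_restrict_of_ae_restrict_of_subset (Icc_subset_Icc hτ0 htT.2) hD'le
      have hb2 : ∫ s in τ..t, C * A s * D s * Real.sqrt |Real.log (D s)|
          ≤ ∫ s in τ..t, (B + η) * A s := by
        refine intervalIntegral.integral_mono_on hτltt.le hIG
          ((hIA τ t hτ0 hτltt.le htT.2).const_mul _) ?_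
        intro s hs
        have hsT : s ∈ Icc (0:ℝ) T := ⟨hτ0.trans hs.1, hs.2.trans htT.2⟩
        have hd : dist s τ < δ₁ := by
          rw [Real.dist_eq, abs_of_nonneg (by linarith [hs.1] : 0 ≤ s - τ)]
          have h5 := min_le_left δ₁ δ₃
          have h6 := hs.2
          linarith
        have h4 := (hδ₁ s hsT hd).le
        have hAs := hA0 s hsT
        calc C * A s * D s * Real.sqrt |Real.log (D s)|
            = A s * (C * D s * Real.sqrt |Real.log (D s)|) := by ring
          _ ≤ A s * (B + η) := mul_le_mul_of_nonneg_left h4 hAs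
          _ = (B + η) * A s := by ring
      have hb3 : ∫ s in τ..t, (B + η) * A s = (B + η) * (F t - F τ) := by
        rw [intervalIntegral.integral_const_mul, ← hFsub τ t hτ0 hτltt.le htT.2]
      have hDt_le : D t ≤ D τ + (B + η) * (F t - F τ) := by linarith
      have hexpt : lam < Real.exp (ε * (t + 1)) := by
        rw [hlam_def]
        exact Real.exp_lt_exp.2 ((mul_lt_mul_iff_right₀ hε).2 (by linarith))
      have hχtval : χ t = Real.exp (ε * (t + 1)) * h (F t) := by
        rw [hχ_def]
        show h (F t) * Real.exp (ε * (t + 1)) = _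
        ring
      have hm3 : lam * ((Hτ - η / lam) * (F t - F τ)) = (lam * Hτ - η) * (F t - F τ) := by
        have h9 : lam * (Hτ - η / lam) = lam * Hτ - η := by
          field_simp
        rw [← mul_assoc, h9]
      have hm2 : (lam * Hτ - η) * (F t - F τ) ≤ lam * (h (F t) - ψτ) := by
        rw [← hm3]
        have := mul_le_mul_of_nonneg_left hψMVT hlampos.le
        rw [hψτ_def]
        linarith
      have hn2 : 0 < (Real.exp (ε * (t + 1)) - lam) * h (F t) :=
        mul_pos (by linarith) (hhpos _)
      have hΔpos : 0 ≤ η * (F t - F τ) := mul_nonneg hηpos.le (by linarith)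
      have hχδ : χ t - χ τ = lam * (h (F t) - ψτ)
          + (Real.exp (ε * (t + 1)) - lam) * h (F t) := by
        rw [hχtval, hχτval, hψτ_def]; ring
      have hrel : (B + η) * (F t - F τ)
          = (lam * Hτ - η) * (F t - F τ) - η * (F t - F τ) := by
        rw [hη_def]; ring
      have hfinal : D t < χ t := by linarith
      exact absurd (habove t hτltt htt₀) (not_lt.2 hfinal.le)
  have hgoal : Real.exp (-(a - C / 2 * ∫ s in (0:ℝ)..t₀, A s) ^ 2) = h (F t₀) := by
    rw [hh_def, hF_def]
  rw [hgoal]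
  have hlim : Filter.Tendsto (fun ε : ℝ => h (F t₀) * Real.exp (ε * (t₀ + 1)))
      (nhdsWithin 0 (Set.Ioi 0)) (nhds (h (F t₀))) := by
    have hc : Continuous (fun ε : ℝ => h (F t₀) * Real.exp (ε * (t₀ + 1))) :=
      continuous_const.mul (Real.continuous_exp.comp (continuous_id.mul continuous_const))
    have h2 := hc.tendsto 0
    simp only [zero_mul, Real.exp_zero, mul_one] at h2
    exact tendsto_nhdsWithin_of_tendsto_nhds h2
  exact ge_of_tendsto hlim (eventually_nhdsWithin_of_forall fun ε hε => key ε hε)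
end

section
/- Let T > 0, C > 0, M > 0, let A : [0, T] → [0, +∞) be integrable, and let y : [0, T] → (0, M] be absolutely continuous with y'(t) ≤ C · A(t) · y(t) · log(M/y(t)) for almost every t ∈ [0, T]. Then for every t ∈ [0, T], y(t) ≤ M · exp{ log(y(0)/M) · exp( −C ∫₀^t A(s) ds ) }. -/
open MeasureTheory Set

set_option maxHeartbeats 1000000

namespace Stmt15Aux

lemma abs_exp_sub_exp_le {x y b : ℝ} (hx : x ≤ b) (hy : y ≤ b) :
    |Real.exp x - Real.exp y| ≤ Real.exp b * |x - y| := by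
  wlog h : y ≤ x generalizing x y
  · rw [abs_sub_comm, abs_sub_comm x y]; exact this hy hx (le_of_not_ge h)
  have h1 : (y - x) + 1 ≤ Real.exp (y - x) := Real.add_one_le_exp _
  have h2 : Real.exp (y - x) * Real.exp x = Real.exp y := by
    rw [← Real.exp_add]; ring_nf
  have h3 : Real.exp x ≤ Real.exp b := Real.exp_le_exp.2 hx
  have h4 := Real.exp_pos x
  rw [abs_of_nonneg (sub_nonneg.2 (Real.exp_le_exp.2 h)), abs_of_nonneg (sub_nonneg.2 h)]
  nlinarith

lemma exp_est {x h b : ℝ} (h0 : 0 ≤ h) (hb : x + h ≤ b) :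
    |Real.exp (x + h) - Real.exp x - h * Real.exp x| ≤ h ^ 2 * Real.exp b := by
  have e1 : Real.exp (x + h) = Real.exp x * Real.exp h := Real.exp_add x h
  have e2 : h + 1 ≤ Real.exp h := Real.add_one_le_exp _
  have e3 : 1 - h ≤ Real.exp (-h) := by have := Real.add_one_le_exp (-h); linarith
  have e4 : Real.exp (-h) * Real.exp h = 1 := by rw [← Real.exp_add]; simp
  have e5 : Real.exp (x + h) ≤ Real.exp b := Real.exp_le_exp.2 hb
  have e6 := Real.exp_pos x
  have e7 := Real.exp_pos h
  have k1 : (1 - h) * Real.exp h ≤ 1 := by nlinarith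
  have k2 : Real.exp h - 1 - h ≤ h ^ 2 * Real.exp h := by nlinarith
  rw [abs_of_nonneg (by nlinarith)]
  nlinarith

lemma log_est {m a b : ℝ} (hm : 0 < m) (ha : m ≤ a) (hb : m ≤ b) :
    |Real.log b - Real.log a - (b - a) / a| ≤ (b - a) ^ 2 / m ^ 2 := by
  have ha0 : 0 < a := hm.trans_le ha
  have hb0 : 0 < b := hm.trans_le hb
  have h1 : Real.log (b / a) ≤ b / a - 1 := Real.log_le_sub_one_of_pos (by positivity)
  have h2 : Real.log (a / b) ≤ a / b - 1 := Real.log_le_sub_one_of_pos (by positivity)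
  rw [Real.log_div hb0.ne' ha0.ne'] at h1
  rw [Real.log_div ha0.ne' hb0.ne'] at h2
  have hba : b / a - 1 = (b - a) / a := by field_simp
  have hab' : a / b - 1 = (a - b) / b := by field_simp
  have e1 : (b - a) / b - (b - a) / a = -((b - a) ^ 2 / (a * b)) := by
    field_simp; ring
  have hmab : m ^ 2 ≤ a * b := by nlinarith
  have e2 : (b - a) ^ 2 / (a * b) ≤ (b - a) ^ 2 / m ^ 2 := by
    apply div_le_div_of_nonneg_left (by positivity) (by positivity) hmab
  rw [abs_le]
  constructor
  · have hge : (a - b) / b = -((b - a) / b) := by ring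
    rw [hab', hge] at h2
    linarith
  · rw [hba] at h1
    have : (0:ℝ) ≤ (b - a) ^ 2 / m ^ 2 := by positivity
    linarith

lemma log_diff_le {m a b : ℝ} (hm : 0 < m) (ha : m ≤ a) (hb : m ≤ b) :
    |Real.log b - Real.log a| ≤ |b - a| / m := by
  have key : ∀ u v : ℝ, m ≤ u → m ≤ v → u ≤ v →
      Real.log v - Real.log u ≤ (v - u) / m := by
    intro u v hu hv huv
    have hu0 : 0 < u := hm.trans_le hu
    have hv0 : 0 < v := hm.trans_le hv
    have h1 : Real.log (v / u) ≤ v / u - 1 := Real.log_le_sub_one_of_pos (by positivity)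
    rw [Real.log_div hv0.ne' hu0.ne'] at h1
    have h2 : v / u - 1 = (v - u) / u := by field_simp
    have h3 : (v - u) / u ≤ (v - u) / m :=
      div_le_div_of_nonneg_left (by linarith) hm hu
    linarith
  rcases le_total a b with h | h
  · have hlog : Real.log a ≤ Real.log b := Real.log_le_log (hm.trans_le ha) h
    rw [abs_of_nonneg (by linarith), abs_of_nonneg (by linarith)]
    exact key a b ha hb h
  · have hlog : Real.log b ≤ Real.log a := Real.log_le_log (hm.trans_le hb) h
    rw [abs_of_nonpos (by linarith), abs_of_nonpos (by linarith)]
    have := key b a hb ha h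
    rw [neg_sub, neg_sub]
    calc Real.log a - Real.log b ≤ (a - b) / m := this
      _ = (a - b) / m := rfl

lemma abs_int_le {s t : ℝ} (hst : s ≤ t) {f g : ℝ → ℝ}
    (hf : IntervalIntegrable f volume s t) (hg : IntervalIntegrable g volume s t)
    (hfg : ∀ u ∈ Icc s t, |f u| ≤ g u) :
    |∫ u in s..t, f u| ≤ ∫ u in s..t, g u :=
  (intervalIntegral.abs_integral_le_integral_abs hst).trans
    (intervalIntegral.integral_mono_on hst hf.abs hg hfg)

lemma primitive_of_local {T : ℝ} (hT : 0 ≤ T) (F h ρ : ℝ → ℝ)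
    (hh : IntegrableOn h (Icc 0 T)) (hρ : IntegrableOn ρ (Icc 0 T))
    (hρ0 : ∀ u ∈ Icc (0:ℝ) T, 0 ≤ ρ u)
    (key : ∀ ε > 0, ∃ δ > 0, ∀ s t : ℝ, 0 ≤ s → s ≤ t → t ≤ T → t - s ≤ δ →
      |F t - F s - ∫ u in s..t, h u| ≤ ε * ∫ u in s..t, ρ u) :
    ∀ t, 0 ≤ t → t ≤ T → F t = F 0 + ∫ u in (0:ℝ)..t, h u := by
  have hIcc : uIcc (0:ℝ) T = Icc 0 T := uIcc_of_le hT
  have hii : ∀ (f : ℝ → ℝ), IntegrableOn f (Icc 0 T) → ∀ s u : ℝ,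
      s ∈ Icc (0:ℝ) T → u ∈ Icc (0:ℝ) T → IntervalIntegrable f volume s u := by
    intro f hf s u hs hu
    apply IntegrableOn.intervalIntegrable
    apply hf.mono_set
    rw [← hIcc]
    exact uIcc_subset_uIcc (hIcc.symm ▸ hs) (hIcc.symm ▸ hu)
  intro t ht0 htT
  set K : ℝ := ∫ u in (0:ℝ)..t, ρ u with hK
  have hKnn : 0 ≤ K :=
    intervalIntegral.integral_nonneg ht0 fun u hu =>
      hρ0 u ⟨hu.1, hu.2.trans htT⟩
  have H : ∀ ε > 0, |F t - F 0 - ∫ u in (0:ℝ)..t, h u| ≤ ε * K := by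
    intro ε hε
    obtain ⟨δ, hδ, hkey⟩ := key ε hε
    obtain ⟨n₀, hn₀⟩ := exists_nat_ge (t / δ)
    set n : ℕ := n₀ + 1 with hn
    have hnpos : 0 < (n : ℝ) := by positivity
    set p : ℕ → ℝ := fun i => (i : ℝ) * (t / n) with hp
    have hstep : 0 ≤ t / n := by positivity
    have hpn : p n = t := by
      simp only [hp]; field_simp
    have hp0 : p 0 = 0 := by simp [hp]
    have hpmono : ∀ i j : ℕ, i ≤ j → p i ≤ p j := by
      intro i j hij
      exact mul_le_mul_of_nonneg_right (by exact_mod_cast hij) hstep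
    have hpT : ∀ i : ℕ, i ≤ n → p i ∈ Icc (0:ℝ) T := by
      intro i hi
      constructor
      · positivity
      · calc p i ≤ p n := hpmono i n hi
          _ = t := hpn
          _ ≤ T := htT
    have hδn : t / n ≤ δ := by
      rw [div_le_iff₀ hnpos]
      have : t / δ ≤ (n : ℝ) := by
        push_cast [hn]; linarith
      calc t = (t / δ) * δ := by field_simp
        _ ≤ (n : ℝ) * δ := mul_le_mul_of_nonneg_right this hδ.le
        _ = δ * n := by ring
    have hsum : ∀ (f : ℝ → ℝ), IntegrableOn f (Icc 0 T) →
        ∑ i ∈ Finset.range n, ∫ u in p i..p (i+1), f u = ∫ u in (0:ℝ)..t, f u := by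
      intro f hf
      have := intervalIntegral.sum_integral_adjacent_intervals
        (μ := volume) (a := p) (n := n)
        (fun i hi => hii f hf (p i) (p (i+1)) (hpT i (le_of_lt hi)) (hpT (i+1) hi))
      rw [hp0, hpn] at this
      exact this
    have hFsum : F t - F 0 = ∑ i ∈ Finset.range n, (F (p (i+1)) - F (p i)) := by
      rw [Finset.sum_range_sub (fun i => F (p i)) n, hp0, hpn]
    calc |F t - F 0 - ∫ u in (0:ℝ)..t, h u|
        = |∑ i ∈ Finset.range n, (F (p (i+1)) - F (p i) - ∫ u in p i..p (i+1), h u)| := by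
          rw [Finset.sum_sub_distrib, ← hFsum, hsum h hh]
      _ ≤ ∑ i ∈ Finset.range n, |F (p (i+1)) - F (p i) - ∫ u in p i..p (i+1), h u| :=
          Finset.abs_sum_le_sum_abs _ _
      _ ≤ ∑ i ∈ Finset.range n, ε * ∫ u in p i..p (i+1), ρ u := by
          apply Finset.sum_le_sum
          intro i hi
          rw [Finset.mem_range] at hi
          apply hkey (p i) (p (i+1)) (hpT i hi.le).1 (hpmono i (i+1) (by omega))
            (hpT (i+1) hi).2
          have : p (i+1) - p i = t / n := by
            simp only [hp]; push_cast; ring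
          rw [this]; exact hδn
      _ = ε * K := by
          rw [← Finset.mul_sum, hsum ρ hρ, hK]
  have habs : |F t - F 0 - ∫ u in (0:ℝ)..t, h u| ≤ 0 := by
    by_contra hc
    push_neg at hc
    have hpos : 0 < |F t - F 0 - ∫ u in (0:ℝ)..t, h u| := hc
    have := H (|F t - F 0 - ∫ u in (0:ℝ)..t, h u| / (2 * (K + 1))) (by positivity)
    have h2 : |F t - F 0 - ∫ (u : ℝ) in (0:ℝ)..t, h u| / (2 * (K + 1)) * K
        < |F t - F 0 - ∫ (u : ℝ) in (0:ℝ)..t, h u| := by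
      rw [div_mul_eq_mul_div, div_lt_iff₀ (by positivity)]
      nlinarith
    linarith
  have : F t - F 0 - ∫ u in (0:ℝ)..t, h u = 0 := abs_eq_zero.1 (le_antisymm habs (abs_nonneg _))
  linarith

end Stmt15Aux

open Stmt15Aux

/-- Osgood/log-Grönwall lemma: if `y : [0,T] → (0, M]` is absolutely
continuous (encoded by the fundamental theorem of calculus with an integrable a.e. derivative
`y'`) and `y' ≤ C·A·y·log(M/y)` a.e., then
`y(t) ≤ M·exp(log(y(0)/M)·exp(−C∫₀ᵗ A))` for every `t ∈ [0,T]`. -/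
theorem stmt15 (T C M : ℝ) (hT : 0 < T) (hC : 0 < C) (hM : 0 < M)
    (A : ℝ → ℝ) (hA : IntegrableOn A (Set.Icc 0 T)) (hA0 : ∀ t ∈ Set.Icc (0:ℝ) T, 0 ≤ A t)
    (y y' : ℝ → ℝ)
    (hypos : ∀ t ∈ Set.Icc (0:ℝ) T, 0 < y t)
    (hyle : ∀ t ∈ Set.Icc (0:ℝ) T, y t ≤ M)
    (hy'int : IntegrableOn y' (Set.Icc 0 T))
    (hFTC : ∀ t ∈ Set.Icc (0:ℝ) T, y t = y 0 + ∫ s in (0:ℝ)..t, y' s)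
    (hy'le : ∀ᵐ t ∂(volume.restrict (Set.Icc (0:ℝ) T)),
      y' t ≤ C * A t * y t * Real.log (M / y t)) :
    ∀ t ∈ Set.Icc (0:ℝ) T,
      y t ≤ M * Real.exp
        (Real.log (y 0 / M) * Real.exp (-C * ∫ s in (0:ℝ)..t, A s)) := by
  intro t htmem
  obtain ⟨ht0, htT⟩ := htmem
  have hIcc : uIcc (0:ℝ) T = Icc 0 T := uIcc_of_le hT.le
  have hii : ∀ (f : ℝ → ℝ), IntegrableOn f (Icc 0 T) → ∀ s u : ℝ,
      s ∈ Icc (0:ℝ) T → u ∈ Icc (0:ℝ) T → IntervalIntegrable f volume s u := by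
    intro f hf s u hs hu
    apply IntegrableOn.intervalIntegrable
    apply hf.mono_set
    rw [← hIcc]
    exact uIcc_subset_uIcc (hIcc.symm ▸ hs) (hIcc.symm ▸ hu)
  set B : ℝ → ℝ := fun u => ∫ s in (0:ℝ)..u, A s with hB
  set G : ℝ → ℝ := fun u => Real.exp (C * B u) with hG
  set w : ℝ → ℝ := fun u => Real.log M - Real.log (y u) with hw
  -- continuity of y
  have hycont : ContinuousOn y (Icc 0 T) := by
    have h1 : ContinuousOn (fun u => y 0 + ∫ s in (0:ℝ)..u, y' s) (Icc 0 T) := by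
      apply continuousOn_const.add
      rw [← hIcc]
      exact intervalIntegral.continuousOn_primitive_interval (hIcc ▸ hy'int)
    exact h1.congr fun u hu => hFTC u hu
  have hBcont : ContinuousOn B (Icc 0 T) := by
    rw [← hIcc]
    exact intervalIntegral.continuousOn_primitive_interval (hIcc ▸ hA)
  -- min of y
  obtain ⟨c, hcmem, hcmin⟩ :=
    isCompact_Icc.exists_isMinOn (nonempty_Icc.2 hT.le) hycont
  set m : ℝ := y c with hm
  have hm0 : 0 < m := hypos c hcmem
  have hym : ∀ u ∈ Icc (0:ℝ) T, m ≤ y u := fun u hu => isMinOn_iff.1 hcmin u hu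
  have hmM : m ≤ M := hyle c hcmem
  -- differences as integrals
  have hydiff : ∀ s u : ℝ, s ∈ Icc (0:ℝ) T → u ∈ Icc (0:ℝ) T →
      y u - y s = ∫ r in s..u, y' r := by
    intro s u hs hu
    rw [hFTC u hu, hFTC s hs, add_sub_add_left_eq_sub]
    exact intervalIntegral.integral_interval_sub_left
      (hii y' hy'int 0 u (left_mem_Icc.2 hT.le) hu)
      (hii y' hy'int 0 s (left_mem_Icc.2 hT.le) hs)
  have hBdiff : ∀ s u : ℝ, s ∈ Icc (0:ℝ) T → u ∈ Icc (0:ℝ) T →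
      B u - B s = ∫ r in s..u, A r := by
    intro s u hs hu
    exact intervalIntegral.integral_interval_sub_left
      (hii A hA 0 u (left_mem_Icc.2 hT.le) hu)
      (hii A hA 0 s (left_mem_Icc.2 hT.le) hs)
  -- bounds on B
  have hBmono : ∀ s u : ℝ, s ∈ Icc (0:ℝ) T → u ∈ Icc (0:ℝ) T → s ≤ u → B s ≤ B u := by
    intro s u hs hu hsu
    have h1 : 0 ≤ ∫ r in s..u, A r :=
      intervalIntegral.integral_nonneg hsu fun r hr =>
        hA0 r ⟨hs.1.trans hr.1, hr.2.trans hu.2⟩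
    have := hBdiff s u hs hu
    linarith
  have hB0 : B 0 = 0 := intervalIntegral.integral_same
  have hBnn : ∀ u ∈ Icc (0:ℝ) T, 0 ≤ B u := by
    intro u hu
    have := hBmono 0 u (left_mem_Icc.2 hT.le) hu hu.1
    rw [hB0] at this; exact this
  have hBleT : ∀ u ∈ Icc (0:ℝ) T, B u ≤ B T := fun u hu =>
    hBmono u T hu (right_mem_Icc.2 hT.le) hu.2
  set Gm : ℝ := Real.exp (C * B T) with hGm
  have hGmpos : 0 < Gm := Real.exp_pos _
  have hGpos : ∀ u : ℝ, 0 < G u := fun u => Real.exp_pos _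
  have hGle : ∀ u ∈ Icc (0:ℝ) T, G u ≤ Gm := by
    intro u hu
    exact Real.exp_le_exp.2 (mul_le_mul_of_nonneg_left (hBleT u hu) hC.le)
  have hG1 : ∀ u ∈ Icc (0:ℝ) T, 1 ≤ G u := by
    intro u hu
    rw [hG]
    have : (0:ℝ) ≤ C * B u := mul_nonneg hC.le (hBnn u hu)
    calc (1:ℝ) = Real.exp 0 := Real.exp_zero.symm
      _ ≤ Real.exp (C * B u) := Real.exp_le_exp.2 this
  -- bounds on w
  set wm : ℝ := Real.log M - Real.log m with hwm
  have hwm0 : 0 ≤ wm := sub_nonneg.2 (Real.log_le_log hm0 hmM)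
  have hwnn : ∀ u ∈ Icc (0:ℝ) T, 0 ≤ w u := fun u hu =>
    sub_nonneg.2 (Real.log_le_log (hypos u hu) (hyle u hu))
  have hwle : ∀ u ∈ Icc (0:ℝ) T, w u ≤ wm := fun u hu =>
    sub_le_sub_left (Real.log_le_log hm0 (hym u hu)) _
  -- uniform continuity moduli
  have hUC : ∀ (f : ℝ → ℝ), ContinuousOn f (Icc 0 T) → ∀ η > (0:ℝ), ∃ δ > (0:ℝ),
      ∀ s u : ℝ, s ∈ Icc (0:ℝ) T → u ∈ Icc (0:ℝ) T → |u - s| ≤ δ → |f u - f s| ≤ η := by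
    intro f hf η hη
    have huc := isCompact_Icc.uniformContinuousOn_of_continuous hf
    rw [Metric.uniformContinuousOn_iff] at huc
    obtain ⟨δ, hδ, hd⟩ := huc η hη
    refine ⟨δ / 2, by positivity, fun s u hs hu hsu => ?_⟩
    have : dist u s < δ := by
      rw [Real.dist_eq]; linarith
    have := hd u hu s hs this
    rw [Real.dist_eq] at this
    exact this.le
  -- continuity of auxiliary functions
  have hinvycont : ContinuousOn (fun u => (y u)⁻¹) (Icc 0 T) :=
    hycont.inv₀ fun x hx => (hypos x hx).ne'
  have hGcont : ContinuousOn G (Icc 0 T) :=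
    Real.continuous_exp.comp_continuousOn (continuousOn_const.mul hBcont)
  have hwcont : ContinuousOn w (Icc 0 T) :=
    continuousOn_const.sub (hycont.log fun x hx => (hypos x hx).ne')
  -- integrable functions
  have hq1 : IntegrableOn (fun u => y' u * (y u)⁻¹) (Icc 0 T) :=
    hy'int.mul_continuousOn hinvycont isCompact_Icc
  have hq2 : IntegrableOn (fun u => y' u * (G u * (y u)⁻¹)) (Icc 0 T) :=
    hy'int.mul_continuousOn (hGcont.mul hinvycont) isCompact_Icc
  have hq3 : IntegrableOn (fun u => A u * (C * G u * w u)) (Icc 0 T) :=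
    hA.mul_continuousOn ((continuousOn_const.mul hGcont).mul hwcont) isCompact_Icc
  set f1 : ℝ → ℝ := fun u => A u * (C * G u * w u) - y' u * (G u * (y u)⁻¹) with hf1
  have hf1int : IntegrableOn f1 (Icc 0 T) := hq3.sub hq2
  set ρ : ℝ → ℝ := fun u => |y' u| + A u with hρ
  have hρint : IntegrableOn ρ (Icc 0 T) := hy'int.abs.add hA
  have hρ0 : ∀ u ∈ Icc (0:ℝ) T, 0 ≤ ρ u := fun u hu =>
    add_nonneg (abs_nonneg _) (hA0 u hu)
  -- KEY local estimate
  have key : ∀ ε > (0:ℝ), ∃ δ > (0:ℝ), ∀ s t' : ℝ, 0 ≤ s → s ≤ t' → t' ≤ T → t' - s ≤ δ →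
      |(w t' * G t') - (w s * G s) - ∫ u in s..t', f1 u| ≤ ε * ∫ u in s..t', ρ u := by
    intro ε hε
    set K1 : ℝ := Gm * 2 / m ^ 2 + Gm * C / m with hK1
    set K2 : ℝ := 2 * wm * C ^ 2 * Gm + C * Gm / m with hK2
    have hK1nn : 0 ≤ K1 := by positivity
    have hK2nn : 0 ≤ K2 := by positivity
    set η : ℝ := ε / (K1 + K2 + 1) with hη
    have hηpos : 0 < η := by positivity
    have hηK1 : η * K1 ≤ ε := by
      rw [hη, div_mul_eq_mul_div, div_le_iff₀ (by positivity)]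
      nlinarith
    have hηK2 : η * K2 ≤ ε := by
      rw [hη, div_mul_eq_mul_div, div_le_iff₀ (by positivity)]
      nlinarith
    obtain ⟨δ₁, hδ₁, hymod⟩ := hUC y hycont η hηpos
    obtain ⟨δ₂, hδ₂, hBmod⟩ := hUC B hBcont η hηpos
    refine ⟨min δ₁ δ₂, lt_min hδ₁ hδ₂, fun s t' h0s hst' ht'T hts => ?_⟩
    have hsmem : s ∈ Icc (0:ℝ) T := ⟨h0s, hst'.trans ht'T⟩
    have ht'mem : t' ∈ Icc (0:ℝ) T := ⟨h0s.trans hst', ht'T⟩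
    have hmem : ∀ u ∈ Icc s t', u ∈ Icc (0:ℝ) T := fun u hu =>
      ⟨h0s.trans hu.1, hu.2.trans ht'T⟩
    have hts1 : t' - s ≤ δ₁ := hts.trans (min_le_left _ _)
    have hts2 : t' - s ≤ δ₂ := hts.trans (min_le_right _ _)
    -- interval integrability on s..t'
    have hy'ii : IntervalIntegrable y' volume s t' := hii y' hy'int s t' hsmem ht'mem
    have hAii : IntervalIntegrable A volume s t' := hii A hA s t' hsmem ht'mem
    have hq1ii : IntervalIntegrable (fun u => y' u * (y u)⁻¹) volume s t' :=
      hii _ hq1 s t' hsmem ht'mem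
    have hq2ii : IntervalIntegrable (fun u => y' u * (G u * (y u)⁻¹)) volume s t' :=
      hii _ hq2 s t' hsmem ht'mem
    have hq3ii : IntervalIntegrable (fun u => A u * (C * G u * w u)) volume s t' :=
      hii _ hq3 s t' hsmem ht'mem
    set Y : ℝ := ∫ u in s..t', |y' u| with hYdef
    set IA : ℝ := ∫ u in s..t', A u with hIAdef
    have hYnn : 0 ≤ Y :=
      intervalIntegral.integral_nonneg hst' fun u _ => abs_nonneg _
    have hIAnn : 0 ≤ IA :=
      intervalIntegral.integral_nonneg hst' fun u hu => hA0 u (hmem u hu)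
    have hIy : y t' - y s = ∫ u in s..t', y' u := hydiff s t' hsmem ht'mem
    have hIA' : B t' - B s = IA := hBdiff s t' hsmem ht'mem
    have hIyabs : |y t' - y s| ≤ Y := by
      rw [hIy]; exact intervalIntegral.abs_integral_le_integral_abs hst'
    have hyst : |y t' - y s| ≤ η :=
      hymod s t' hsmem ht'mem (by rw [abs_of_nonneg (by linarith)]; exact hts1)
    have hBst : |B t' - B s| ≤ η :=
      hBmod s t' hsmem ht'mem (by rw [abs_of_nonneg (by linarith)]; exact hts2)
    have hIAη : IA ≤ η := by rw [← hIA']; exact (le_abs_self _).trans hBst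
    -- pointwise facts on [s, t']
    have hmle : ∀ u ∈ Icc s t', m ≤ y u := fun u hu => hym u (hmem u hu)
    have hypos' : ∀ u ∈ Icc s t', 0 < y u := fun u hu => hypos u (hmem u hu)
    have hydist : ∀ u ∈ Icc s t', ∀ v ∈ Icc s t', |y u - y v| ≤ η := by
      intro u hu v hv
      apply hymod v u (hmem v hv) (hmem u hu)
      rw [abs_le]
      constructor <;> [linarith [hu.1, hv.2, hts1, hu.2, hv.1];
        linarith [hu.2, hv.1, hts1]]
    have hBdist : ∀ u ∈ Icc s t', ∀ v ∈ Icc s t', |B u - B v| ≤ η := by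
      intro u hu v hv
      apply hBmod v u (hmem v hv) (hmem u hu)
      rw [abs_le]
      constructor <;> [linarith [hu.1, hv.2, hts2]; linarith [hu.2, hv.1, hts2]]
    have hGdist : ∀ u ∈ Icc s t', ∀ v ∈ Icc s t', |G u - G v| ≤ Gm * (C * η) := by
      intro u hu v hv
      have h1 : C * B u ≤ C * B T :=
        mul_le_mul_of_nonneg_left (hBleT u (hmem u hu)) hC.le
      have h2 : C * B v ≤ C * B T :=
        mul_le_mul_of_nonneg_left (hBleT v (hmem v hv)) hC.le
      have h3 := abs_exp_sub_exp_le h1 h2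
      have h4 : |C * B u - C * B v| = C * |B u - B v| := by
        rw [← mul_sub, abs_mul, abs_of_nonneg hC.le]
      simp only [hG]
      calc |Real.exp (C * B u) - Real.exp (C * B v)|
          ≤ Real.exp (C * B T) * |C * B u - C * B v| := h3
        _ = Gm * (C * |B u - B v|) := by rw [h4, hGm]
        _ ≤ Gm * (C * η) := by
            apply mul_le_mul_of_nonneg_left _ hGmpos.le
            exact mul_le_mul_of_nonneg_left (hBdist u hu v hv) hC.le
    have hwdist : ∀ u ∈ Icc s t', ∀ v ∈ Icc s t', |w u - w v| ≤ η / m := by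
      intro u hu v hv
      have h1 : |Real.log (y u) - Real.log (y v)| ≤ |y u - y v| / m :=
        log_diff_le hm0 (hmle v hv) (hmle u hu)
      have h2 : |w u - w v| = |Real.log (y u) - Real.log (y v)| := by
        simp only [hw]
        rw [show Real.log M - Real.log (y u) - (Real.log M - Real.log (y v))
          = -(Real.log (y u) - Real.log (y v)) by ring, abs_neg]
      rw [h2]
      exact h1.trans ((div_le_div_iff_of_pos_right hm0).2 (hydist u hu v hv))
    have hsmem' : s ∈ Icc s t' := ⟨le_refl s, hst'⟩
    have ht'mem' : t' ∈ Icc s t' := ⟨hst', le_refl t'⟩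
    -- names for the integrals
    set L : ℝ := ∫ u in s..t', y' u * (y u)⁻¹ with hLdef
    set J1 : ℝ := ∫ u in s..t', A u * (C * G u * w u) with hJ1def
    set J2 : ℝ := ∫ u in s..t', y' u * (G u * (y u)⁻¹) with hJ2def
    have hyspos : 0 < y s := hypos s hsmem
    -- Step A : Taylor estimate for log at the endpoints
    have hstepA : |Real.log (y t') - Real.log (y s) - (y t' - y s) / (y s)|
        ≤ η * Y / m ^ 2 := by
      have h0 := log_est hm0 (hym s hsmem) (hym t' ht'mem)
      have h1 : (y t' - y s) ^ 2 ≤ η * Y := by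
        have h2 : |y t' - y s| * |y t' - y s| ≤ η * Y :=
          mul_le_mul hyst hIyabs (abs_nonneg _) hηpos.le
        calc (y t' - y s) ^ 2 = |y t' - y s| * |y t' - y s| := by
              rw [abs_mul_abs_self]; ring
          _ ≤ η * Y := h2
      exact h0.trans ((div_le_div_iff_of_pos_right (by positivity)).2 h1)
    -- the endpoint ratio as an integral
    have hratio : (y t' - y s) / (y s) = ∫ u in s..t', y' u * (y s)⁻¹ := by
      rw [intervalIntegral.integral_mul_const, ← hIy, div_eq_mul_inv]
    -- Step B : freeze the denominator
    have hstepB : |(∫ u in s..t', y' u * (y s)⁻¹) - L| ≤ Y * (η / m ^ 2) := by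
      have hsub : (∫ u in s..t', y' u * (y s)⁻¹) - L
          = ∫ u in s..t', (y' u * (y s)⁻¹ - y' u * (y u)⁻¹) := by
        rw [hLdef, intervalIntegral.integral_sub (hy'ii.mul_const _) hq1ii]
      rw [hsub]
      have hpt : ∀ u ∈ Icc s t',
          |y' u * (y s)⁻¹ - y' u * (y u)⁻¹| ≤ |y' u| * (η / m ^ 2) := by
        intro u hu
        have hyupos : 0 < y u := hypos' u hu
        have hinv : |(y s)⁻¹ - (y u)⁻¹| ≤ η / m ^ 2 := by
          have he : (y s)⁻¹ - (y u)⁻¹ = (y u - y s) / (y s * y u) := by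
            field_simp
          have hprod : 0 < y s * y u := mul_pos hyspos hyupos
          rw [he, abs_div, abs_of_pos hprod]
          apply div_le_div₀ hηpos.le (hydist u hu s hsmem') (pow_pos hm0 2)
          calc m ^ 2 = m * m := sq m
            _ ≤ y s * y u := mul_le_mul (hym s hsmem) (hmle u hu) hm0.le
                (hm0.le.trans (hym s hsmem))
        calc |y' u * (y s)⁻¹ - y' u * (y u)⁻¹| = |y' u| * |(y s)⁻¹ - (y u)⁻¹| := by
              rw [← mul_sub, abs_mul]
          _ ≤ |y' u| * (η / m ^ 2) := mul_le_mul_of_nonneg_left hinv (abs_nonneg _)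
      calc |∫ u in s..t', (y' u * (y s)⁻¹ - y' u * (y u)⁻¹)|
          ≤ ∫ u in s..t', |y' u| * (η / m ^ 2) :=
            abs_int_le hst' ((hy'ii.mul_const _).sub hq1ii)
              (hy'ii.abs.mul_const (η / m ^ 2)) hpt
        _ = Y * (η / m ^ 2) := by rw [intervalIntegral.integral_mul_const, hYdef]
    -- combined estimate for log
    have he1 : |Real.log (y t') - Real.log (y s) - L| ≤ 2 * η / m ^ 2 * Y := by
      have htri : Real.log (y t') - Real.log (y s) - L
          = (Real.log (y t') - Real.log (y s) - (y t' - y s) / (y s))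
            + ((∫ u in s..t', y' u * (y s)⁻¹) - L) := by
        rw [← hratio]; ring
      rw [htri]
      calc |_ + _| ≤ _ := abs_add_le _ _
        _ ≤ η * Y / m ^ 2 + Y * (η / m ^ 2) := add_le_add hstepA hstepB
        _ = 2 * η / m ^ 2 * Y := by ring
    -- Step G : freeze G in J2
    have hstepG : |J2 - L * G t'| ≤ Y * (Gm * C * η / m) := by
      have hsub : J2 - L * G t'
          = ∫ u in s..t', (y' u * (G u * (y u)⁻¹) - (y' u * (y u)⁻¹) * G t') := by
        rw [intervalIntegral.integral_sub hq2ii (hq1ii.mul_const _),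
          intervalIntegral.integral_mul_const, hJ2def, hLdef]
      rw [hsub]
      have hpt : ∀ u ∈ Icc s t',
          |y' u * (G u * (y u)⁻¹) - (y' u * (y u)⁻¹) * G t'|
            ≤ |y' u| * (Gm * C * η / m) := by
        intro u hu
        have hyupos : 0 < y u := hypos' u hu
        have hGd : |G u - G t'| ≤ Gm * (C * η) := hGdist u hu t' ht'mem'
        have hinvle : (y u)⁻¹ ≤ m⁻¹ := by
          apply inv_anti₀ hm0 (hmle u hu)
        calc |y' u * (G u * (y u)⁻¹) - (y' u * (y u)⁻¹) * G t'|
            = |y' u| * ((y u)⁻¹ * |G u - G t'|) := by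
              rw [show y' u * (G u * (y u)⁻¹) - (y' u * (y u)⁻¹) * G t'
                = y' u * ((y u)⁻¹ * (G u - G t')) by ring, abs_mul, abs_mul,
                abs_of_pos (inv_pos.2 hyupos)]
          _ ≤ |y' u| * (m⁻¹ * (Gm * (C * η))) := by
              apply mul_le_mul_of_nonneg_left _ (abs_nonneg _)
              apply mul_le_mul hinvle hGd (abs_nonneg _) (by positivity)
          _ = |y' u| * (Gm * C * η / m) := by ring
      calc |∫ u in s..t', (y' u * (G u * (y u)⁻¹) - (y' u * (y u)⁻¹) * G t')|
          ≤ ∫ u in s..t', |y' u| * (Gm * C * η / m) :=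
            abs_int_le hst' (hq2ii.sub (hq1ii.mul_const _))
              (hy'ii.abs.mul_const (Gm * C * η / m)) hpt
        _ = Y * (Gm * C * η / m) := by rw [intervalIntegral.integral_mul_const, hYdef]
    -- T1 bound
    have hT1 : |G t' * (w t' - w s) + J2| ≤ η * K1 * Y := by
      have hwd : w t' - w s = -(Real.log (y t') - Real.log (y s)) := by
        simp only [hw]; ring
      have hGt'le : G t' ≤ Gm := hGle t' ht'mem
      have hGt'pos : 0 < G t' := hGpos t'
      have hid : G t' * (w t' - w s) + J2
          = -(G t' * (Real.log (y t') - Real.log (y s) - L)) + (J2 - L * G t') := by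
        rw [hwd]; ring
      rw [hid]
      calc |_ + _| ≤ _ := abs_add_le _ _
        _ = G t' * |Real.log (y t') - Real.log (y s) - L| + |J2 - L * G t'| := by
            rw [abs_neg, abs_mul, abs_of_pos hGt'pos]
        _ ≤ Gm * (2 * η / m ^ 2 * Y) + Y * (Gm * C * η / m) := by
            apply add_le_add _ hstepG
            apply mul_le_mul hGt'le he1 (abs_nonneg _) hGmpos.le
        _ = η * K1 * Y := by rw [hK1]; ring
    -- Step C : exponential estimate
    have hstepC : |G t' - G s - (C * IA) * G s| ≤ (C * η) * (C * IA) * Gm := by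
      have hx : C * B t' = C * B s + C * IA := by rw [← hIA']; ring
      have h0 : 0 ≤ C * IA := by positivity
      have hb : C * B s + C * IA ≤ C * B T := by
        rw [← hx]; exact mul_le_mul_of_nonneg_left (hBleT t' ht'mem) hC.le
      have hest := exp_est h0 hb
      have h5 : (C * IA) ^ 2 ≤ (C * η) * (C * IA) := by
        have h7 : C * IA ≤ C * η := mul_le_mul_of_nonneg_left hIAη hC.le
        calc (C * IA) ^ 2 = (C * IA) * (C * IA) := sq (C * IA)
          _ ≤ (C * η) * (C * IA) := mul_le_mul_of_nonneg_right h7 h0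
      have h6 : (C * IA) ^ 2 * Real.exp (C * B T) ≤ (C * η) * (C * IA) * Gm := by
        rw [hGm]
        exact mul_le_mul_of_nonneg_right h5 (Real.exp_pos _).le
      have hGt' : G t' = Real.exp (C * B s + C * IA) := by
        simp only [hG]; rw [hx]
      have hGs : G s = Real.exp (C * B s) := by simp only [hG]
      rw [hGt', hGs]
      calc |Real.exp (C * B s + C * IA) - Real.exp (C * B s)
            - C * IA * Real.exp (C * B s)| ≤ (C * IA) ^ 2 * Real.exp (C * B T) := hest
        _ ≤ (C * η) * (C * IA) * Gm := h6
    -- Step D : freeze G and w in J1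
    have hstepD : |IA * (C * G s * w s) - J1|
        ≤ IA * (C * (Gm * (η / m) + wm * (Gm * (C * η)))) := by
      have hconst : IA * (C * G s * w s) = ∫ u in s..t', A u * (C * G s * w s) := by
        rw [intervalIntegral.integral_mul_const, hIAdef]
      have hsub : IA * (C * G s * w s) - J1
          = ∫ u in s..t', (A u * (C * G s * w s) - A u * (C * G u * w u)) := by
        rw [hconst, hJ1def, intervalIntegral.integral_sub (hAii.mul_const _) hq3ii]
      rw [hsub]
      have hpt : ∀ u ∈ Icc s t',
          |A u * (C * G s * w s) - A u * (C * G u * w u)|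
            ≤ A u * (C * (Gm * (η / m) + wm * (Gm * (C * η)))) := by
        intro u hu
        have humem : u ∈ Icc (0:ℝ) T := hmem u hu
        have hGw : |G s * w s - G u * w u| ≤ Gm * (η / m) + wm * (Gm * (C * η)) := by
          have hid2 : G s * w s - G u * w u = G s * (w s - w u) + w u * (G s - G u) := by
            ring
          rw [hid2]
          calc |_ + _| ≤ _ := abs_add_le _ _
            _ = G s * |w s - w u| + w u * |G s - G u| := by
                rw [abs_mul, abs_mul, abs_of_pos (hGpos s),
                  abs_of_nonneg (hwnn u humem)]
            _ ≤ Gm * (η / m) + wm * (Gm * (C * η)) := by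
                apply add_le_add
                · exact mul_le_mul (hGle s hsmem) (hwdist s hsmem' u hu)
                    (abs_nonneg _) hGmpos.le
                · exact mul_le_mul (hwle u humem) (hGdist s hsmem' u hu)
                    (abs_nonneg _) hwm0
        calc |A u * (C * G s * w s) - A u * (C * G u * w u)|
            = A u * (C * |G s * w s - G u * w u|) := by
              rw [show A u * (C * G s * w s) - A u * (C * G u * w u)
                = A u * (C * (G s * w s - G u * w u)) by ring, abs_mul, abs_mul,
                abs_of_nonneg (hA0 u humem), abs_of_pos hC]
          _ ≤ A u * (C * (Gm * (η / m) + wm * (Gm * (C * η)))) := by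
              apply mul_le_mul_of_nonneg_left _ (hA0 u humem)
              exact mul_le_mul_of_nonneg_left hGw hC.le
      calc |∫ u in s..t', (A u * (C * G s * w s) - A u * (C * G u * w u))|
          ≤ ∫ u in s..t', A u * (C * (Gm * (η / m) + wm * (Gm * (C * η)))) :=
            abs_int_le hst' ((hAii.mul_const _).sub hq3ii)
              (hAii.mul_const (C * (Gm * (η / m) + wm * (Gm * (C * η))))) hpt
        _ = IA * (C * (Gm * (η / m) + wm * (Gm * (C * η)))) := by
            rw [intervalIntegral.integral_mul_const, hIAdef]
    -- T2 bound
    have hT2 : |w s * (G t' - G s) - J1| ≤ η * K2 * IA := by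
      have hid : w s * (G t' - G s) - J1
          = w s * (G t' - G s - (C * IA) * G s) + (IA * (C * G s * w s) - J1) := by
        ring
      rw [hid]
      calc |_ + _| ≤ _ := abs_add_le _ _
        _ ≤ w s * ((C * η) * (C * IA) * Gm)
            + IA * (C * (Gm * (η / m) + wm * (Gm * (C * η)))) := by
            apply add_le_add _ hstepD
            rw [abs_mul, abs_of_nonneg (hwnn s hsmem)]
            exact mul_le_mul_of_nonneg_left hstepC (hwnn s hsmem)
        _ ≤ wm * ((C * η) * (C * IA) * Gm)
            + IA * (C * (Gm * (η / m) + wm * (Gm * (C * η)))) := by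
            refine add_le_add ?_ le_rfl
            apply mul_le_mul_of_nonneg_right (hwle s hsmem) (by positivity)
        _ = η * K2 * IA := by rw [hK2]; ring
    -- put everything together
    have hsplit : ∫ u in s..t', f1 u = J1 - J2 := by
      simp only [hf1]
      rw [intervalIntegral.integral_sub hq3ii hq2ii, hJ1def, hJ2def]
    have hρsplit : ∫ u in s..t', ρ u = Y + IA := by
      simp only [hρ]
      rw [intervalIntegral.integral_add hy'ii.abs hAii, hYdef, hIAdef]
    have hid : (w t' * G t') - (w s * G s) - ∫ u in s..t', f1 u
        = (G t' * (w t' - w s) + J2) + (w s * (G t' - G s) - J1) := by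
      rw [hsplit]; ring
    rw [hid, hρsplit]
    calc |_ + _| ≤ _ := abs_add_le _ _
      _ ≤ η * K1 * Y + η * K2 * IA := add_le_add hT1 hT2
      _ ≤ ε * Y + ε * IA := add_le_add
          (mul_le_mul_of_nonneg_right hηK1 hYnn)
          (mul_le_mul_of_nonneg_right hηK2 hIAnn)
      _ = ε * (Y + IA) := by ring
  -- apply the master lemma
  have hmaster := primitive_of_local hT.le (fun u => w u * G u) f1 ρ hf1int hρint hρ0 key
    t ht0 htT
  -- nonnegativity of the integrand a.e.
  have hf1pos : 0 ≤ᵐ[volume.restrict (Icc (0:ℝ) T)] f1 := by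
    filter_upwards [hy'le, ae_restrict_mem measurableSet_Icc] with u hu1 hu2
    have hyu : 0 < y u := hypos u hu2
    have hwu : Real.log (M / y u) = w u := by
      rw [Real.log_div hM.ne' hyu.ne', hw]
    have hdiv : y' u * (y u)⁻¹ ≤ C * A u * w u := by
      rw [← div_eq_mul_inv, div_le_iff₀ hyu]
      calc y' u ≤ C * A u * y u * Real.log (M / y u) := hu1
        _ = C * A u * w u * y u := by rw [hwu]; ring
    have hGu : 0 < G u := hGpos u
    have hwu0 : 0 ≤ w u := hwnn u hu2
    have hAu : 0 ≤ A u := hA0 u hu2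
    simp only [hf1, Pi.zero_apply]
    have h2 : y' u * (G u * (y u)⁻¹) = (y' u * (y u)⁻¹) * G u := by ring
    rw [h2]
    have h3 : (y' u * (y u)⁻¹) * G u ≤ (C * A u * w u) * G u :=
      mul_le_mul_of_nonneg_right hdiv hGu.le
    nlinarith
  have hint_nonneg : 0 ≤ ∫ u in (0:ℝ)..t, f1 u :=
    intervalIntegral.integral_nonneg_of_ae_restrict ht0
      (ae_restrict_of_ae_restrict_of_subset (Icc_subset_Icc le_rfl htT) hf1pos)
  -- conclude
  have hG0 : G 0 = 1 := by rw [hG]; simp [hB0]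
  have hψ : w 0 ≤ w t * G t := by
    have := hmaster
    rw [hG0, mul_one] at this
    linarith
  have htmem' : t ∈ Icc (0:ℝ) T := ⟨ht0, htT⟩
  have h0mem : (0:ℝ) ∈ Icc (0:ℝ) T := left_mem_Icc.2 hT.le
  have hy0 : 0 < y 0 := hypos 0 h0mem
  have hyt : 0 < y t := hypos t htmem'
  have hGt : 0 < G t := hGpos t
  have hwt : w 0 * (G t)⁻¹ ≤ w t := by
    rw [← div_eq_mul_inv, div_le_iff₀ hGt]
    exact hψ
  have hexp : Real.exp (-C * B t) = (G t)⁻¹ := by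
    rw [hG, ← Real.exp_neg]
    congr 1
    ring
  have hlogy0 : Real.log (y 0 / M) = -(w 0) := by
    rw [Real.log_div hy0.ne' hM.ne', hw]
    ring
  have hlog : Real.log (y t) ≤ Real.log M + Real.log (y 0 / M) * Real.exp (-C * B t) := by
    rw [hlogy0, hexp]
    have : w t = Real.log M - Real.log (y t) := rfl
    have h5 : Real.log (y t) = Real.log M - w t := by rw [this]; ring
    rw [h5]
    linarith [hwt]
  show y t ≤ M * Real.exp (Real.log (y 0 / M) * Real.exp (-C * B t))
  calc y t = Real.exp (Real.log (y t)) := (Real.exp_log hyt).symm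
    _ ≤ Real.exp (Real.log M + Real.log (y 0 / M) * Real.exp (-C * B t)) :=
        Real.exp_le_exp.2 hlog
    _ = M * Real.exp (Real.log (y 0 / M) * Real.exp (-C * B t)) := by
        rw [Real.exp_add, Real.exp_log hM]
end
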